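/- If x ∈ D = { k/r^n ∈ [0,1] : k, n nonnegative integers }, then the right derivative of f_r at x equals +∞ and the left derivative of f_r at x equals -∞, i.e., lim_{h↓0} (f_r(x+h) - f_r(x))/h = +∞ (for x < 1) and lim_{h↓0} (f_r(x-h) - f_r(x))/(-h) = -∞ (for x > 0). -/

import Mathlib

open Set Filter MeasureTheory Metric Topology

/-- Distance from `x` to the nearest integer. -/
noncomputable def phiTW (x : ℝ) : ℝ := Metric.infDist x (Set.range (Int.cast : ℤ → ℝ))

/-- The Takagi–Van der Waerden function `f_r`. -/
noncomputable def fTW (r : ℕ) (x : ℝ) : ℝ :=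
  ∑' n : ℕ, (1 / (r : ℝ) ^ n) * phiTW ((r : ℝ) ^ n * x)

/-- `D_n = { k / r^(n-1) : k ∈ ℤ } ∩ [0,1]` (intended for `n ≥ 1`). -/
def DTW (r n : ℕ) : Set ℝ :=
  {y : ℝ | ∃ k : ℤ, y = (k : ℝ) / (r : ℝ) ^ (n - 1)} ∩ Set.Icc 0 1

/-- `g_n(x) = dist(x, D_n)`. -/
noncomputable def gTW (r n : ℕ) (x : ℝ) : ℝ := Metric.infDist x (DTW r n)

/-- `D̃_n`: midpoints of consecutive points of `D_n`. -/
def DtTW (r n : ℕ) : Set ℝ :=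
  {y : ℝ | ∃ k : ℤ, y = (2 * (k : ℝ) + 1) / (2 * (r : ℝ) ^ (n - 1))} ∩ Set.Icc 0 1

/-- `D = ⋃_{n ≥ 1} D_n`. -/
def DTWall (r : ℕ) : Set ℝ := ⋃ n ≥ 1, DTW r n

/-- `D̃ = ⋃_{n ≥ 1} D̃_n`. -/
def DtTWall (r : ℕ) : Set ℝ := ⋃ n ≥ 1, DtTW r n

/-!
If `r ^ N * x` is an integer, the terms of `f_r` with index `n ≥ N` see `x` as an integer, so
`f_r (x + t) - f_r x ≥ ∑_{n ≥ N} r⁻ⁿ φ (rⁿ t) - N |t|` because `φ` is 1-Lipschitz.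
Every `n` with `rⁿ |t| ≤ 1/2` contributes exactly `|t|` to that sum, and there are about
`log_r (1 / |t|)` such `n`, so the difference quotient over `|t|` tends to `+∞` from both sides.
-/

lemma phiTW_le_abs_sub_intCast (x : ℝ) (m : ℤ) : phiTW x ≤ |x - m| := by
  simpa [phiTW, Real.dist_eq] using infDist_le_dist_of_mem (x := x) (mem_range_self m)

lemma phiTW_eq_abs_sub_round (x : ℝ) : phiTW x = |x - round x| := by
  refine le_antisymm (phiTW_le_abs_sub_intCast x (round x)) ?_
  rw [phiTW, le_infDist (range_nonempty _)]
  rintro _ ⟨m, rfl⟩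
  simpa [Real.dist_eq] using round_le x m

lemma phiTW_nonneg (x : ℝ) : 0 ≤ phiTW x := infDist_nonneg

lemma phiTW_le_half (x : ℝ) : phiTW x ≤ 1 / 2 := by
  rw [phiTW_eq_abs_sub_round]
  exact abs_sub_round x

lemma phiTW_intCast (m : ℤ) : phiTW m = 0 := infDist_zero_of_mem (mem_range_self m)

lemma phiTW_intCast_add (m : ℤ) (x : ℝ) : phiTW (m + x) = phiTW x := by
  rw [phiTW_eq_abs_sub_round, phiTW_eq_abs_sub_round, round_intCast_add, Int.cast_add,
    add_sub_add_left_eq_sub]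

lemma phiTW_neg_le (x : ℝ) : phiTW (-x) ≤ phiTW x := by
  have := phiTW_le_abs_sub_intCast (-x) (-round x)
  rwa [Int.cast_neg, sub_neg_eq_add, neg_add_eq_sub, abs_sub_comm,
    ← phiTW_eq_abs_sub_round] at this

lemma phiTW_neg (x : ℝ) : phiTW (-x) = phiTW x :=
  le_antisymm (phiTW_neg_le x) (by simpa using phiTW_neg_le (-x))

lemma phiTW_abs (x : ℝ) : phiTW |x| = phiTW x := by
  rcases abs_choice x with h | h <;> rw [h]
  exact phiTW_neg x

lemma phiTW_eq_self {t : ℝ} (h0 : 0 ≤ t) (h1 : t ≤ 1 / 2) : phiTW t = t := by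
  refine le_antisymm (by simpa [abs_of_nonneg h0] using phiTW_le_abs_sub_intCast t 0) ?_
  rw [phiTW_eq_abs_sub_round]
  rcases le_or_gt (round t) 0 with hm | hm
  · have : (round t : ℝ) ≤ 0 := by exact_mod_cast hm
    exact le_abs.2 (Or.inl (by linarith))
  · have : (1 : ℝ) ≤ round t := by exact_mod_cast hm
    exact le_abs.2 (Or.inr (by linarith))

lemma abs_phiTW_sub_le (x y : ℝ) : |phiTW x - phiTW y| ≤ |x - y| := by
  simpa [phiTW, Real.dist_eq] using
    (lipschitz_infDist_pt (range (Int.cast : ℤ → ℝ))).dist_le_mul x y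

section Takagi

variable {r : ℕ}

lemma summable_fTW_term (hr : 2 ≤ r) (x : ℝ) :
    Summable fun n : ℕ => 1 / (r : ℝ) ^ n * phiTW ((r : ℝ) ^ n * x) := by
  have hgeom := summable_geometric_of_lt_one (by positivity)
    (inv_lt_one_of_one_lt₀ (Nat.one_lt_cast.2 hr : (1 : ℝ) < r))
  refine Summable.of_nonneg_of_le (fun n => mul_nonneg (by positivity) (phiTW_nonneg _))
    (fun n => ?_) (hgeom.mul_left (1 / 2))
  calc 1 / (r : ℝ) ^ n * phiTW ((r : ℝ) ^ n * x) ≤ 1 / (r : ℝ) ^ n * (1 / 2) :=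
        mul_le_mul_of_nonneg_left (phiTW_le_half _) (by positivity)
    _ = 1 / 2 * (r : ℝ)⁻¹ ^ n := by rw [inv_pow]; ring

lemma fTW_add_sub_eq {N : ℕ} {x : ℝ} {k : ℤ} (hr : 2 ≤ r) (hk : (r : ℝ) ^ N * x = k)
    (t : ℝ) :
    fTW r (x + t) - fTW r x =
      (∑ n ∈ Finset.range N,
        1 / (r : ℝ) ^ n * (phiTW ((r : ℝ) ^ n * (x + t)) - phiTW ((r : ℝ) ^ n * x)))
      + ∑' m : ℕ, 1 / (r : ℝ) ^ (m + N) * phiTW ((r : ℝ) ^ (m + N) * t) := by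
  have hs1 := summable_fTW_term hr (x + t)
  have hs2 := summable_fTW_term hr x
  rw [fTW, fTW, ← hs1.tsum_sub hs2, ← (hs1.sub hs2).sum_add_tsum_nat_add N]
  congr 1
  · exact Finset.sum_congr rfl fun n _ => (mul_sub _ _ _).symm
  · refine tsum_congr fun m => ?_
    have hx : (r : ℝ) ^ (m + N) * x = ((r ^ m * k : ℤ) : ℝ) := by
      push_cast [pow_add]
      rw [mul_assoc, hk]
    rw [mul_add, hx, phiTW_intCast_add, phiTW_intCast, mul_zero, sub_zero]

lemma neg_mul_abs_le_sum_fTW_head (hr : 2 ≤ r) (N : ℕ) (x t : ℝ) :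
    -(N * |t|) ≤ ∑ n ∈ Finset.range N,
      1 / (r : ℝ) ^ n * (phiTW ((r : ℝ) ^ n * (x + t)) - phiTW ((r : ℝ) ^ n * x)) := by
  calc -(N * |t|) = ∑ _n ∈ Finset.range N, -|t| := by simp
    _ ≤ _ := Finset.sum_le_sum fun n _ => ?_
  have hpow : (0 : ℝ) < (r : ℝ) ^ n := pow_pos (by positivity) n
  have hlip := abs_phiTW_sub_le ((r : ℝ) ^ n * (x + t)) ((r : ℝ) ^ n * x)
  rw [← mul_sub, add_sub_cancel_left, abs_mul, abs_of_pos hpow] at hlip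
  calc -|t| = 1 / (r : ℝ) ^ n * -((r : ℝ) ^ n * |t|) := by field_simp
    _ ≤ _ := mul_le_mul_of_nonneg_left (neg_le_of_abs_le hlip) (by positivity)

lemma mul_abs_le_tsum_fTW_tail (hr : 2 ≤ r) {M N : ℕ} {t : ℝ}
    (ht : (r : ℝ) ^ (M + N) * |t| ≤ 1 / 2) :
    M * |t| ≤ ∑' m : ℕ, 1 / (r : ℝ) ^ (m + N) * phiTW ((r : ℝ) ^ (m + N) * t) := by
  have hr1 : (1 : ℝ) < r := Nat.one_lt_cast.2 hr
  have hterm : ∀ m ∈ Finset.range M,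
      1 / (r : ℝ) ^ (m + N) * phiTW ((r : ℝ) ^ (m + N) * t) = |t| := by
    intro m hm
    have hle : (r : ℝ) ^ (m + N) * |t| ≤ 1 / 2 :=
      le_trans (mul_le_mul_of_nonneg_right
        (pow_le_pow_right₀ hr1.le (by simp at hm; omega)) (abs_nonneg t)) ht
    rw [← phiTW_abs, abs_mul, abs_of_nonneg (by positivity), phiTW_eq_self (by positivity) hle]
    field_simp
  calc (M : ℝ) * |t| = ∑ m ∈ Finset.range M,
        1 / (r : ℝ) ^ (m + N) * phiTW ((r : ℝ) ^ (m + N) * t) := by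
        rw [Finset.sum_congr rfl hterm]; simp
    _ ≤ _ := ((summable_nat_add_iff N).2 (summable_fTW_term hr t)).sum_le_tsum _
        fun m _ => mul_nonneg (by positivity) (phiTW_nonneg _)

lemma sub_mul_abs_le_fTW_add_sub {M N : ℕ} {x t : ℝ} {k : ℤ} (hr : 2 ≤ r)
    (hk : (r : ℝ) ^ N * x = k) (ht : (r : ℝ) ^ (M + N) * |t| ≤ 1 / 2) :
    ((M : ℝ) - N) * |t| ≤ fTW r (x + t) - fTW r x := by
  rw [fTW_add_sub_eq hr hk t]
  linarith [neg_mul_abs_le_sum_fTW_head hr N x t, mul_abs_le_tsum_fTW_tail hr ht]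

theorem tendsto_fTW_slope_abs {N : ℕ} {x : ℝ} {k : ℤ} (hr : 2 ≤ r)
    (hk : (r : ℝ) ^ N * x = k) :
    Tendsto (fun t => (fTW r (x + t) - fTW r x) / |t|) (𝓝[≠] 0) atTop := by
  refine tendsto_atTop.2 fun b => ?_
  set M := N + ⌈b⌉₊
  have hbM : b ≤ (M : ℝ) - N := by simp [M, Nat.le_ceil]
  have hδ : (0 : ℝ) < 1 / (2 * (r : ℝ) ^ (M + N)) := by positivity
  filter_upwards [inter_mem_nhdsWithin _ (ball_mem_nhds 0 hδ), self_mem_nhdsWithin]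
    with t ⟨_, htδ⟩ ht0
  have ht : 0 < |t| := abs_pos.2 ht0
  rw [mem_ball, dist_zero_right, Real.norm_eq_abs, lt_div_iff₀ (by positivity)] at htδ
  rw [le_div_iff₀ ht]
  exact (mul_le_mul_of_nonneg_right hbM ht.le).trans
    (sub_mul_abs_le_fTW_add_sub hr hk (by linarith))

end Takagi

theorem stmt7_general (r : ℕ) (hr : 2 ≤ r) (x : ℝ)
    (hxD : ∃ k n : ℕ, x = (k : ℝ) / (r : ℝ) ^ n) :
    (x < 1 → Tendsto (fun h : ℝ => (fTW r (x + h) - fTW r x) / h) (𝓝[>] 0) atTop) ∧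
    (0 < x → Tendsto (fun h : ℝ => (fTW r (x - h) - fTW r x) / (-h)) (𝓝[>] 0) atBot) := by
  obtain ⟨k, N, rfl⟩ := hxD
  have hk : (r : ℝ) ^ N * (k / (r : ℝ) ^ N) = (k : ℤ) := by
    have : (r : ℝ) ^ N ≠ 0 := by positivity
    push_cast
    field_simp
  have hslope := tendsto_fTW_slope_abs hr hk
  refine ⟨fun _ => ?_, fun _ => ?_⟩
  · refine (hslope.mono_left (nhdsGT_le_nhdsNE 0)).congr' ?_
    filter_upwards [self_mem_nhdsWithin] with h (hh : 0 < h)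
    rw [abs_of_pos hh]
  · have hneg : Tendsto (fun h : ℝ => -h) (𝓝[>] 0) (𝓝[≠] 0) := by
      simpa using (tendsto_neg_nhdsGT_neg (a := (0 : ℝ))).mono_right (nhdsLT_le_nhdsNE _)
    refine (tendsto_neg_atTop_atBot.comp (hslope.comp hneg)).congr' ?_
    filter_upwards [self_mem_nhdsWithin] with h (hh : 0 < h)
    simp [abs_of_pos hh, sub_eq_add_neg, div_neg]

theorem stmt7 (r : ℕ) (hr : 2 ≤ r) (x : ℝ) (hx : x ∈ Set.Icc (0:ℝ) 1)
    (hxD : ∃ k n : ℕ, x = (k : ℝ) / (r : ℝ) ^ n) :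
    (x < 1 → Tendsto (fun h : ℝ => (fTW r (x + h) - fTW r x) / h) (𝓝[>] 0) atTop) ∧
    (0 < x → Tendsto (fun h : ℝ => (fTW r (x - h) - fTW r x) / (-h)) (𝓝[>] 0) atBot) :=
  stmt7_general r hr x hxD
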